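/- Let c be a complex number, and suppose c = a/q + γ where a, q are coprime Gaussian integers, q ≠ 0, and |γ| ≤ |q|⁻². If n₁, n₂ are Gaussian integers with n₁ ≢ n₂ (mod q), then ‖n₁c − n₂c‖ ≥ 1/(√2·|q|) − |n₁ − n₂|/|q|², where for a complex number z, ‖z‖ := max{‖Re(z)‖, ‖Im(z)‖} and ‖x‖ denotes the distance from the real x to the nearest rational integer. -/

import Mathlib

open Complex GaussianInt

/-- Distance from a real number to the nearest integer. -/
noncomputable def nint (x : ℝ) : ℝ := ⨅ n : ℤ, |x - (n : ℝ)|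

/-- Sup-norm distance from a complex number to the nearest Gaussian integer. -/
noncomputable def nintC (z : ℂ) : ℝ := max (nint z.re) (nint z.im)

/-! Put `m = n₁ - n₂`, so that `m c = m a / q + m γ`. As `a` is coprime to `q` and `q ∤ m`,
every `m a - g q` with `g ∈ ℤ[i]` is a nonzero Gaussian integer, hence of absolute value `≥ 1`:
the point `m a / q` lies at Euclidean distance `≥ 1 / |q|` from `ℤ[i]`, and `|m γ| ≤ |m| / |q|²`.
Rounding both coordinates shows that the sup-norm distance to `ℤ[i]` is at least `1/√2` times
the Euclidean one. -/

lemma nint_eq_abs_sub_round (x : ℝ) : nint x = |x - round x| :=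
  le_antisymm (ciInf_le ⟨0, by rintro _ ⟨n, rfl⟩; positivity⟩ (round x))
    (le_ciInf (round_le x))

lemma exists_norm_sub_le_sqrt_two_mul_nintC (z : ℂ) :
    ∃ g : GaussianInt, ‖z - g‖ ≤ √2 * nintC z := by
  let g : GaussianInt := ⟨round z.re, round z.im⟩
  refine ⟨g, ?_⟩
  simpa [g, nintC, nint_eq_abs_sub_round, re_toComplex, im_toComplex] using
    norm_le_sqrt_two_mul_max (z - g)

lemma GaussianInt.one_le_norm_toComplex {x : GaussianInt} (hx : x ≠ 0) : 1 ≤ ‖(x : ℂ)‖ := by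
  have h : (1 : ℝ) ≤ normSq x := by
    rw [← intCast_real_norm]
    exact_mod_cast norm_pos.2 hx
  rw [Complex.norm_def]
  exact Real.one_le_sqrt.2 h

lemma GaussianInt.inv_norm_le_norm_div_sub {m q : GaussianInt} (h : ¬ q ∣ m) (g : GaussianInt) :
    ‖(q : ℂ)‖⁻¹ ≤ ‖(m : ℂ) / q - g‖ := by
  rcases eq_or_ne q 0 with rfl | hq
  · simp
  have hqC : (q : ℂ) ≠ 0 := toComplex_eq_zero.not.2 hq
  have hr : m - q * g ≠ 0 := fun h0 => h ⟨g, sub_eq_zero.1 h0⟩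
  have : (m : ℂ) / q - g = ((m - q * g : GaussianInt) : ℂ) / q := by
    rw [toComplex_sub, toComplex_mul]
    field_simp
  rw [this, norm_div, inv_eq_one_div]
  gcongr
  exact one_le_norm_toComplex hr

lemma sub_le_sqrt_two_mul_nintC {z w : ℂ} {r e : ℝ} (hw : ∀ g : GaussianInt, r ≤ ‖w - g‖)
    (hzw : ‖z - w‖ ≤ e) : r - e ≤ √2 * nintC z := by
  obtain ⟨g, hg⟩ := exists_norm_sub_le_sqrt_two_mul_nintC z
  have := norm_sub_le_norm_sub_add_norm_sub w z g
  rw [norm_sub_rev w z] at this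
  linarith [hw g]

theorem gaussian_spacing_general (c γ : ℂ) (a q : GaussianInt)
    (hcop : IsCoprime a q) (hc : c = (a : ℂ) / (q : ℂ) + γ)
    (hγ : ‖γ‖ ≤ (‖(q : ℂ)‖)⁻¹ ^ 2)
    (n₁ n₂ : GaussianInt) (hmod : ¬ q ∣ (n₁ - n₂)) :
    1 / (Real.sqrt 2 * ‖(q : ℂ)‖) -
        ‖(n₁ : ℂ) - (n₂ : ℂ)‖ / ‖(q : ℂ)‖ ^ 2 ≤
      nintC ((n₁ : ℂ) * c - (n₂ : ℂ) * c) := by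
  set m := n₁ - n₂
  have hmC : (m : ℂ) = n₁ - n₂ := toComplex_sub n₁ n₂
  have hma : ¬ q ∣ m * a := fun h => hmod (hcop.symm.dvd_of_dvd_mul_right h)
  have hz : (n₁ : ℂ) * c - n₂ * c - ((m * a : GaussianInt) : ℂ) / q = m * γ := by
    rw [toComplex_mul, hmC, hc]
    ring
  have hmγ : ‖(m : ℂ) * γ‖ ≤ ‖(m : ℂ)‖ / ‖(q : ℂ)‖ ^ 2 := by
    rw [norm_mul, div_eq_mul_inv, ← inv_pow]
    gcongr
  have hdist := sub_le_sqrt_two_mul_nintC (inv_norm_le_norm_div_sub hma) (hz ▸ hmγ)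
  rw [hmC] at hdist
  calc 1 / (√2 * ‖(q : ℂ)‖) - ‖(n₁ : ℂ) - n₂‖ / ‖(q : ℂ)‖ ^ 2
      ≤ (‖(q : ℂ)‖⁻¹ - ‖(n₁ : ℂ) - n₂‖ / ‖(q : ℂ)‖ ^ 2) / √2 := by
        rw [sub_div, one_div, mul_inv, inv_mul_eq_div]
        exact sub_le_sub_left (div_le_self (by positivity) (Real.one_le_sqrt.2 one_le_two)) _
    _ ≤ nintC ((n₁ : ℂ) * c - n₂ * c) := by
        rwa [div_le_iff₀ (by positivity), mul_comm]

/-- Spacing of the points `nc` modulo `ℤ[i]`: if `c = a/q + γ` with `(a,q) = 1`,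
`|γ| ≤ |q|⁻²`, and `n₁ ≢ n₂ (mod q)`, then
`‖n₁c − n₂c‖ ≥ 1/(√2|q|) − |n₁ − n₂|/|q|²`. -/
theorem gaussian_spacing (c γ : ℂ) (a q : GaussianInt) (hq : q ≠ 0)
    (hcop : IsCoprime a q) (hc : c = (a : ℂ) / (q : ℂ) + γ)
    (hγ : ‖γ‖ ≤ (‖(q : ℂ)‖)⁻¹ ^ 2)
    (n₁ n₂ : GaussianInt) (hmod : ¬ q ∣ (n₁ - n₂)) :
    1 / (Real.sqrt 2 * ‖(q : ℂ)‖) -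
        ‖(n₁ : ℂ) - (n₂ : ℂ)‖ / ‖(q : ℂ)‖ ^ 2 ≤
      nintC ((n₁ : ℂ) * c - (n₂ : ℂ) * c) :=
  gaussian_spacing_general c γ a q hcop hc hγ n₁ n₂ hmod
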